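/- Let G be a non-simple loop-free multigraph, minimal under admissible double edge swaps, with maximal non-simple edge {u1,u2}, u1 > u2, let L be the set of large vertices and ℓ = |L|. If G has at least one edge between two small vertices, then every small vertex v has at least min(ℓ+1, deg v) edges (counted with multiplicity) to vertices in L ∪ {u1}. -/
import Mathlib


open Finset

/-- A loopy multigraph on vertex set `V`: each unordered pair (possibly a loop)
has a multiplicity. -/
abbrev Multigraph (V : Type*) := Sym2 V → ℕ

variable {V : Type*}

/-- The degree of a vertex: each incident edge counts with multiplicity,
and a loop counts twice. -/
def mdeg [Fintype V] (G : Multigraph V) (v : V) : ℕ :=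
  (∑ u : V, G s(v, u)) + G s(v, v)

/-- A multigraph is simple if it has no loops and every multiplicity is at most one. -/
def IsSimpleMG (G : Multigraph V) : Prop :=
  (∀ v : V, G s(v, v) = 0) ∧ ∀ e : Sym2 V, G e ≤ 1

/-- A multigraph is loop-free if it has no loops. -/
def LoopFree (G : Multigraph V) : Prop := ∀ v : V, G s(v, v) = 0

/-- A degree function is graphical if it is realized by some simple graph. -/
def GraphicalDeg [Fintype V] (d : V → ℕ) : Prop :=
  ∃ H : Multigraph V, IsSimpleMG H ∧ ∀ v : V, mdeg H v = d v

/-- The result of the double edge swap removing one copy each of `{v1,v2}` and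
`{v3,v4}` and adding one copy each of `{v2,v3}` and `{v4,v1}`. -/
def swapped [DecidableEq V] (G : Multigraph V) (v1 v2 v3 v4 : V) : Multigraph V :=
  fun e => G e - (if e = s(v1, v2) then 1 else 0) - (if e = s(v3, v4) then 1 else 0)
    + (if e = s(v2, v3) then 1 else 0) + (if e = s(v4, v1) then 1 else 0)

/-- The edges `{v1,v2}` and `{v3,v4}` share no vertex. -/
def NotIncident (v1 v2 v3 v4 : V) : Prop :=
  v1 ≠ v3 ∧ v1 ≠ v4 ∧ v2 ≠ v3 ∧ v2 ≠ v4

/-- One admissible double edge swap: the two removed edges exist, are not incident,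
and at least one of them is a loop or has multiplicity at least two. -/
def AdmissibleStep [DecidableEq V] (G G' : Multigraph V) : Prop :=
  ∃ v1 v2 v3 v4 : V, NotIncident v1 v2 v3 v4 ∧
    1 ≤ G s(v1, v2) ∧ 1 ≤ G s(v3, v4) ∧
    (v1 = v2 ∨ v3 = v4 ∨ 2 ≤ G s(v1, v2) ∨ 2 ≤ G s(v3, v4)) ∧
    G' = swapped G v1 v2 v3 v4

/-- The larger endpoint of an unordered pair. -/
def pmax [LinearOrder V] (p : Sym2 V) : V :=
  Sym2.lift ⟨fun a b => max a b, fun a b => max_comm a b⟩ p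

/-- The smaller endpoint of an unordered pair. -/
def pmin [LinearOrder V] (p : Sym2 V) : V :=
  Sym2.lift ⟨fun a b => min a b, fun a b => min_comm a b⟩ p

/-- Order on unordered pairs: compare larger endpoints, then smaller endpoints. -/
def PairLT [LinearOrder V] (p q : Sym2 V) : Prop :=
  pmax p < pmax q ∨ (pmax p = pmax q ∧ pmin p < pmin q)

def PairLE [LinearOrder V] (p q : Sym2 V) : Prop := p = q ∨ PairLT p q

/-- The pair `p` carries a non-simple edge of `G`: a multiple edge or a loop. -/
def NonSimpleAt (G : Multigraph V) (p : Sym2 V) : Prop :=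
  2 ≤ G p ∨ (p.IsDiag ∧ 1 ≤ G p)

/-- `p` is the maximal non-simple edge of `G`. -/
def MaxNonSimple [LinearOrder V] (G : Multigraph V) (p : Sym2 V) : Prop :=
  NonSimpleAt G p ∧ ∀ q : Sym2 V, NonSimpleAt G q → PairLE q p

/-- The strict partial order on multigraphs with fixed degrees: `G < H` iff `H` is
non-simple and its maximal non-simple edge is larger than all non-simple edges of `G`,
or the maximal non-simple edges agree but have strictly larger multiplicity in `H`. -/
def GraphLT [LinearOrder V] (G H : Multigraph V) : Prop :=
  ∃ p : Sym2 V, MaxNonSimple H p ∧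
    ((∀ q : Sym2 V, NonSimpleAt G q → PairLT q p) ∨ (MaxNonSimple G p ∧ G p < H p))

section Aux
variable {V : Type*} [LinearOrder V]

private lemma pmax_mk (a b : V) : pmax s(a,b) = max a b := by
  simp [pmax]

private lemma pmin_mk (a b : V) : pmin s(a,b) = min a b := by
  simp [pmin]

private lemma pairLT_low {u1 u2 a b : V} (hu : u2 < u1) (ha : a < u1) (hb : b < u1) :
    PairLT s(a,b) s(u1,u2) :=
  Or.inl (by rw [pmax_mk, pmax_mk, max_eq_left hu.le]; exact max_lt ha hb)

private lemma pairLT_mid₁ {u1 u2 a : V} (hu : u2 < u1) (ha : a < u2) :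
    PairLT s(a,u1) s(u1,u2) := by
  refine Or.inr ⟨?_, ?_⟩
  · rw [pmax_mk, pmax_mk, max_eq_left hu.le, max_eq_right (ha.trans hu).le]
  · rw [pmin_mk, pmin_mk, min_eq_right hu.le, min_eq_left (ha.trans hu).le]
    exact ha

private lemma pairLT_mid₂ {u1 u2 a : V} (hu : u2 < u1) (ha : a < u2) :
    PairLT s(u1,a) s(u1,u2) := by
  rw [Sym2.eq_swap]; exact pairLT_mid₁ hu ha

private lemma two_le {G : Multigraph V} {u1 u2 : V} (hu : u2 < u1)
    (hmax : MaxNonSimple G s(u1,u2)) : 2 ≤ G s(u1,u2) := by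
  rcases hmax.1 with h | ⟨hd, _⟩
  · exact h
  · exact absurd (Sym2.mk_isDiag_iff.mp hd) hu.ne'

private lemma nonSimple_swapped {G : Multigraph V} {a b c d : V} {q : Sym2 V}
    (h : NonSimpleAt (swapped G a b c d) q) :
    q = s(b,c) ∨ q = s(d,a) ∨ NonSimpleAt G q := by
  by_cases h1 : q = s(b,c)
  · exact Or.inl h1
  by_cases h2 : q = s(d,a)
  · exact Or.inr (Or.inl h2)
  refine Or.inr (Or.inr ?_)
  have hle : swapped G a b c d q ≤ G q := by
    simp only [swapped, if_neg h1, if_neg h2, add_zero]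
    omega
  rcases h with h | ⟨hd, h⟩
  · exact Or.inl (le_trans h hle)
  · exact Or.inr ⟨hd, le_trans h hle⟩

private lemma graphLT_master {G G' : Multigraph V} {u1 u2 : V} (hu : u2 < u1)
    (hmax : MaxNonSimple G s(u1,u2))
    (hdec : G' s(u1,u2) + 1 = G s(u1,u2))
    (hall : ∀ q, NonSimpleAt G' q → PairLE q s(u1,u2)) :
    GraphLT G' G := by
  refine ⟨s(u1,u2), hmax, ?_⟩
  by_cases h2 : 2 ≤ G' s(u1,u2)
  · exact Or.inr ⟨⟨Or.inl h2, hall⟩, by omega⟩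
  · refine Or.inl fun q hq => ?_
    rcases hall q hq with rfl | hlt
    · exfalso
      rcases hq with h | ⟨hd, _⟩
      · exact h2 h
      · exact hu.ne' (Sym2.mk_isDiag_iff.mp hd)
    · exact hlt

private lemma mult_le_one_high {G : Multigraph V} {u1 u2 : V}
    (hmax : MaxNonSimple G s(u1,u2)) (hu : u2 < u1)
    {x y : V} (hxy : u1 < max x y) : G s(x,y) ≤ 1 := by
  by_contra h
  have h2 : NonSimpleAt G s(x,y) := Or.inl (by omega)
  rcases hmax.2 _ h2 with heq | hlt
  · have : pmax s(x,y) = pmax s(u1,u2) := by rw [heq]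
    rw [pmax_mk, pmax_mk, max_eq_left hu.le] at this
    exact absurd hxy (by rw [this]; exact lt_irrefl u1)
  · rcases hlt with h' | ⟨h', _⟩ <;>
    · rw [pmax_mk, pmax_mk, max_eq_left hu.le] at h'
      first
        | exact absurd hxy (not_lt_of_gt h')
        | exact absurd hxy (by rw [h']; exact lt_irrefl u1)

private lemma mult_le_one_near {G : Multigraph V} {u1 u2 : V} (hlf : LoopFree G)
    (hmax : MaxNonSimple G s(u1,u2)) (hu : u2 < u1)
    {x : V} (hx : u2 < x) : G s(x,u1) ≤ 1 := by
  rcases lt_trichotomy x u1 with hlt | rfl | hgt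
  · by_contra h
    have h2 : NonSimpleAt G s(x,u1) := Or.inl (by omega)
    rcases hmax.2 _ h2 with heq | hlt'
    · rw [Sym2.eq_iff] at heq
      rcases heq with ⟨rfl, h'⟩ | ⟨rfl, -⟩
      · exact hu.ne' h'
      · exact lt_irrefl _ hx
    · rcases hlt' with h' | ⟨-, h''⟩
      · rw [pmax_mk, pmax_mk, max_eq_left hu.le, max_eq_right hlt.le] at h'
        exact lt_irrefl _ h'
      · rw [pmin_mk, pmin_mk, min_eq_right hu.le, min_eq_left hlt.le] at h''
        exact absurd hx (not_lt_of_gt h'')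
  · rw [hlf]; omega
  · exact mult_le_one_high hmax hu (lt_max_iff.mpr (Or.inl hgt))

end Aux
section Aux2
variable {V : Type*} [Fintype V] [LinearOrder V]

set_option linter.unusedSectionVars false

private lemma card_le_sum_ones {s : Finset V} {f : V → ℕ} (h : ∀ x ∈ s, 1 ≤ f x) :
    s.card ≤ ∑ x ∈ s, f x := by
  have := Finset.card_nsmul_le_sum s f 1 h
  simpa using this

private lemma degmono {G : Multigraph V} (hord : ∀ u v : V, mdeg G u < mdeg G v → u < v)
    {u v : V} (h : u < v) : mdeg G u ≤ mdeg G v :=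
  le_of_not_gt fun hlt => absurd (hord v u hlt) (asymm h)

private lemma lemmaW {G : Multigraph V} (hlf : LoopFree G)
    (hord : ∀ u v : V, mdeg G u < mdeg G v → u < v)
    {u1 u2 c w : V} (hu : u2 < u1) (hmax : MaxNonSimple G s(u1,u2))
    (hw : u1 < w) (hcw : G s(c,w) = 0) (hcu1 : 1 ≤ G s(c,u1)) (hc : c < u1) :
    ∃ y, y ≠ u1 ∧ y ≠ c ∧ 1 ≤ G s(w,y) ∧ (y < u2 ∨ G s(y,u1) = 0) := by
  by_contra hno
  push_neg at hno
  set Nw := univ.filter (fun y => 1 ≤ G s(w,y)) with hNw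
  set Nu := univ.filter (fun y => 1 ≤ G s(u1,y)) with hNu
  have hwm : mdeg G w ≤ Nw.card := by
    rw [mdeg, hlf w, add_zero]
    calc ∑ u, G s(w,u) ≤ ∑ u : V, (if 1 ≤ G s(w,u) then 1 else 0) := by
          refine Finset.sum_le_sum fun y _ => ?_
          by_cases h : 1 ≤ G s(w,y)
          · rw [if_pos h]
            exact mult_le_one_high hmax hu (lt_max_iff.mpr (Or.inl hw))
          · rw [if_neg h]; omega
      _ = Nw.card := by rw [Finset.sum_boole, hNw]; norm_num
  have hsub : Nw ⊆ insert u1 (Nu.erase c) := by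
    intro y hy
    rw [hNw, Finset.mem_filter] at hy
    rcases eq_or_ne y u1 with rfl | hy1
    · exact Finset.mem_insert_self _ _
    · have hyc : y ≠ c := by
        rintro rfl
        rw [Sym2.eq_swap] at hcw
        omega
      refine Finset.mem_insert_of_mem (Finset.mem_erase.mpr ⟨hyc, ?_⟩)
      rw [hNu, Finset.mem_filter]
      have := (hno y hy1 hyc hy.2).2
      rw [Sym2.eq_swap] at this
      exact ⟨Finset.mem_univ _, by omega⟩
  have hcNu : c ∈ Nu := by
    rw [hNu, Finset.mem_filter]
    rw [Sym2.eq_swap] at hcu1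
    exact ⟨Finset.mem_univ _, hcu1⟩
  have hcard1 : Nw.card ≤ Nu.card := by
    refine le_trans (Finset.card_le_card hsub) ?_
    have h1 := Finset.card_insert_le u1 (Nu.erase c)
    have h2 : (Nu.erase c).card = Nu.card - 1 := Finset.card_erase_of_mem hcNu
    have h3 : 1 ≤ Nu.card := Finset.card_pos.mpr ⟨c, hcNu⟩
    omega
  have hu2Nu : u2 ∈ Nu := by
    rw [hNu, Finset.mem_filter]
    have := two_le hu hmax
    exact ⟨Finset.mem_univ _, by omega⟩
  have hdu1 : Nu.card + 1 ≤ mdeg G u1 := by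
    rw [mdeg, hlf u1, add_zero]
    have hsumNu : ∑ y ∈ Nu, G s(u1,y) ≤ ∑ y : V, G s(u1,y) :=
      Finset.sum_le_sum_of_subset (Finset.subset_univ _)
    have hsplit : G s(u1,u2) + ∑ y ∈ Nu.erase u2, G s(u1,y) = ∑ y ∈ Nu, G s(u1,y) :=
      Finset.add_sum_erase _ (fun y => G s(u1,y)) hu2Nu
    have hb : (Nu.erase u2).card ≤ ∑ y ∈ Nu.erase u2, G s(u1,y) := by
      refine card_le_sum_ones fun y hy => ?_
      have := Finset.mem_of_mem_erase hy
      rw [hNu, Finset.mem_filter] at this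
      exact this.2
    have h2 : (Nu.erase u2).card = Nu.card - 1 := Finset.card_erase_of_mem hu2Nu
    have h3 : 1 ≤ Nu.card := Finset.card_pos.mpr ⟨u2, hu2Nu⟩
    have hm2 := two_le hu hmax
    omega
  have hmono : mdeg G u1 ≤ mdeg G w := degmono hord hw
  omega

private lemma betaCount {G : Multigraph V} (hlf : LoopFree G)
    (hord : ∀ u v : V, mdeg G u < mdeg G v → u < v)
    {u1 u2 c : V} (hu : u2 < u1) (hmax : MaxNonSimple G s(u1,u2))
    (hc : c < u1) (hu2c : u2 < c)
    (hsmall : ∀ y, y < u1 → y ≠ u2 → G s(c,y) = 0)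
    (hbig : ∀ w', u1 < w' → 1 ≤ G s(c,w') → 1 ≤ G s(w',u2)) : False := by
  set B := univ.filter (fun y => u1 < y ∧ 1 ≤ G s(c,y)) with hB
  have hcle : mdeg G c ≤ 1 + G s(c,u2) + B.card := by
    rw [mdeg, hlf c, add_zero]
    have hm1 : u1 ∈ (univ : Finset V) := Finset.mem_univ _
    have hsplit1 : G s(c,u1) + ∑ y ∈ univ.erase u1, G s(c,y) = ∑ y : V, G s(c,y) :=
      Finset.add_sum_erase _ (fun y => G s(c,y)) hm1
    have hm2 : u2 ∈ (univ : Finset V).erase u1 :=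
      Finset.mem_erase.mpr ⟨hu.ne, Finset.mem_univ _⟩
    have hsplit2 : G s(c,u2) + ∑ y ∈ (univ.erase u1).erase u2, G s(c,y)
        = ∑ y ∈ univ.erase u1, G s(c,y) := Finset.add_sum_erase _ (fun y => G s(c,y)) hm2
    have h1 : G s(c,u1) ≤ 1 := mult_le_one_near hlf hmax hu hu2c
    have h3 : ∑ y ∈ (univ.erase u1).erase u2, G s(c,y) ≤ B.card := by
      calc ∑ y ∈ (univ.erase u1).erase u2, G s(c,y)
          ≤ ∑ y ∈ (univ.erase u1).erase u2, (if u1 < y ∧ 1 ≤ G s(c,y) then 1 else 0) := by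
            refine Finset.sum_le_sum fun y hy => ?_
            have hy2 : y ≠ u2 := (Finset.mem_erase.mp hy).1
            have hy1 : y ≠ u1 := (Finset.mem_erase.mp (Finset.mem_of_mem_erase hy)).1
            by_cases hcase : u1 < y ∧ 1 ≤ G s(c,y)
            · rw [if_pos hcase]
              exact mult_le_one_high hmax hu (lt_max_iff.mpr (Or.inr hcase.1))
            · rw [if_neg hcase]
              push_neg at hcase
              rcases lt_or_gt_of_ne hy1 with hlt | hgt
              · rw [hsmall y hlt hy2]
              · have := hcase hgt
                omega
        _ ≤ ∑ y : V, (if u1 < y ∧ 1 ≤ G s(c,y) then 1 else 0) :=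
            Finset.sum_le_sum_of_subset (Finset.subset_univ _)
        _ = B.card := by rw [Finset.sum_boole, hB]; norm_num
    omega
  have hd2 : 2 + G s(c,u2) + B.card ≤ mdeg G u2 := by
    rw [mdeg, hlf u2, add_zero]
    have hu1n : u1 ∉ insert c B := by
      simp only [Finset.mem_insert, hB, Finset.mem_filter]
      push_neg
      exact ⟨hc.ne', fun _ h => absurd h (lt_irrefl u1).elim⟩
    have hcn : c ∉ B := by
      simp only [hB, Finset.mem_filter]
      push_neg
      intro _ h
      exact absurd h (not_lt_of_gt hc)
    have hsub : insert u1 (insert c B) ⊆ univ := Finset.subset_univ _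
    have hle : ∑ y ∈ insert u1 (insert c B), G s(u2,y) ≤ ∑ y : V, G s(u2,y) :=
      Finset.sum_le_sum_of_subset hsub
    rw [Finset.sum_insert hu1n, Finset.sum_insert hcn] at hle
    have hBsum : B.card ≤ ∑ y ∈ B, G s(u2,y) := by
      refine card_le_sum_ones fun y hy => ?_
      rw [hB, Finset.mem_filter] at hy
      have := hbig y hy.2.1 hy.2.2
      rw [Sym2.eq_swap] at this
      exact this
    have hm := two_le hu hmax
    have e1 : G s(u2,u1) = G s(u1,u2) := by rw [Sym2.eq_swap]
    have e2 : G s(u2,c) = G s(c,u2) := by rw [Sym2.eq_swap]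
    omega
  have hmono : mdeg G u2 ≤ mdeg G c := degmono hord hu2c
  omega

end Aux2
section Aux3
variable {V : Type*} [LinearOrder V]

set_option linter.unusedSectionVars false

private lemma gadgetA {G : Multigraph V}
    (hmin : ∀ G' : Multigraph V, Relation.ReflTransGen AdmissibleStep G G' → ¬ GraphLT G' G)
    {u1 u2 t1 t2 : V} (hu : u2 < u1) (hmax : MaxNonSimple G s(u1,u2))
    (h1 : t1 < u1) (h2 : t2 < u1) (h1u2 : t1 ≠ u2) (h2u2 : t2 ≠ u2)
    (he : 1 ≤ G s(t1,t2)) (hsafe : t1 < u2 ∨ G s(t1,u1) = 0) : False := by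
  have m2 := two_le hu hmax
  have h1u1 : t1 ≠ u1 := h1.ne
  have h2u1 : t2 ≠ u1 := h2.ne
  have h12 : u1 ≠ u2 := hu.ne'
  set G1 := swapped G u2 u1 t1 t2 with hG1
  have hsw : G s(u2,u1) = G s(u1,u2) := by rw [Sym2.eq_swap]
  have step1 : AdmissibleStep G G1 :=
    ⟨u2, u1, t1, t2, ⟨Ne.symm h1u2, Ne.symm h2u2, Ne.symm h1u1, Ne.symm h2u1⟩,
      by omega, he, Or.inr (Or.inr (Or.inl (by omega))), hG1⟩
  have e_p : G1 s(u1,u2) + 1 = G s(u1,u2) := by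
    rw [hG1]
    simp only [swapped, Sym2.eq_iff]
    simp [h12, h1u1, h2u1, h1u2, h2u2, Ne.symm h1u1, Ne.symm h2u1, Ne.symm h1u2,
      Ne.symm h2u2]
    omega
  have hall : ∀ q, NonSimpleAt G1 q → PairLE q s(u1,u2) := by
    intro q hq
    rw [hG1] at hq
    rcases nonSimple_swapped hq with rfl | rfl | h
    · rcases hsafe with hlt | h0
      · exact Or.inr (pairLT_mid₂ hu hlt)
      · exfalso
        have ev : G1 s(u1,t1) = G s(u1,t1) + 1 := by
          rw [hG1]
          simp only [swapped, Sym2.eq_iff]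
          simp [h12, h1u1, h2u1, h1u2, h2u2, Ne.symm h1u1, Ne.symm h2u1, Ne.symm h1u2,
            Ne.symm h2u2]
        have hsw2 : G s(u1,t1) = G s(t1,u1) := by rw [Sym2.eq_swap]
        rw [← hG1] at hq
        rcases hq with hx | ⟨hd, _⟩
        · omega
        · exact (Ne.symm h1u1) (Sym2.mk_isDiag_iff.mp hd)
    · exact Or.inr (pairLT_low hu h2 hu)
    · exact hmax.2 q h
  exact hmin G1 (Relation.ReflTransGen.single step1) (graphLT_master hu hmax e_p hall)

end Aux3
section Aux4
variable {V : Type*} [LinearOrder V]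

set_option linter.unusedSectionVars false

private lemma gadgetC {G : Multigraph V} (hlf : LoopFree G)
    (hmin : ∀ G' : Multigraph V, Relation.ReflTransGen AdmissibleStep G G' → ¬ GraphLT G' G)
    {u1 u2 c z w y : V} (hu : u2 < u1) (hmax : MaxNonSimple G s(u1,u2))
    (hc : c < u1) (hcu2 : c ≠ u2)
    (hz1 : z ≠ u1) (hz2 : z ≠ u2) (hzw : z ≠ w)
    (hcz : 1 ≤ G s(c,z)) (hcu1 : 1 ≤ G s(c,u1))
    (hw : u1 < w) (hcw : G s(c,w) = 0)
    (hy1 : y ≠ u1) (hyc : y ≠ c) (hwy : 1 ≤ G s(w,y))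
    (hysafe : y < u2 ∨ G s(y,u1) = 0)
    (hzsafe : z < u1 ∨ G s(z,u2) = 0) : False := by
  have m2 := two_le hu hmax
  have h12 : u1 ≠ u2 := hu.ne'
  have hcu1' : c ≠ u1 := hc.ne
  have hzc : z ≠ c := fun h => by rw [h] at hcz; have := hlf c; omega
  have hwu1 : w ≠ u1 := hw.ne'
  have hwu2 : w ≠ u2 := (hu.trans hw).ne'
  have hwc : w ≠ c := (hc.trans hw).ne'
  have hyw : y ≠ w := fun h => by rw [h] at hwy; have := hlf w; omega
  have hsw0 : G s(u2,u1) = G s(u1,u2) := by rw [Sym2.eq_swap]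
  have hyu2 : y ≠ u2 := by
    rintro rfl
    rcases hysafe with h | h
    · exact lt_irrefl _ h
    · rw [Sym2.eq_swap] at h; omega
  have hswc : G s(u1,c) = G s(c,u1) := by rw [Sym2.eq_swap]
  set G1 := swapped G u2 u1 c z with hG1
  set G2 := swapped G1 u1 c w y with hG2
  have v_u1c_1 : G1 s(u1,c) = G s(u1,c) + 1 := by
    rw [hG1]
    simp only [swapped, Sym2.eq_iff]
    simp [h12, Ne.symm h12, hcu1', Ne.symm hcu1', hcu2, Ne.symm hcu2, hz1, Ne.symm hz1,
      hz2, Ne.symm hz2, hzw, Ne.symm hzw, hzc, Ne.symm hzc, hwu1, Ne.symm hwu1,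
      hwu2, Ne.symm hwu2, hwc, Ne.symm hwc, hy1, Ne.symm hy1, hyc, Ne.symm hyc,
      hyu2, Ne.symm hyu2, hyw, Ne.symm hyw]
  have v_wy_1 : G1 s(w,y) = G s(w,y) := by
    rw [hG1]
    simp only [swapped, Sym2.eq_iff]
    simp [h12, Ne.symm h12, hcu1', Ne.symm hcu1', hcu2, Ne.symm hcu2, hz1, Ne.symm hz1,
      hz2, Ne.symm hz2, hzw, Ne.symm hzw, hzc, Ne.symm hzc, hwu1, Ne.symm hwu1,
      hwu2, Ne.symm hwu2, hwc, Ne.symm hwc, hy1, Ne.symm hy1, hyc, Ne.symm hyc,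
      hyu2, Ne.symm hyu2, hyw, Ne.symm hyw]
  have step1 : AdmissibleStep G G1 :=
    ⟨u2, u1, c, z, ⟨Ne.symm hcu2, Ne.symm hz2, Ne.symm hcu1', Ne.symm hz1⟩,
      by omega, hcz, Or.inr (Or.inr (Or.inl (by omega))), hG1⟩
  have step2 : AdmissibleStep G1 G2 :=
    ⟨u1, c, w, y, ⟨Ne.symm hwu1, Ne.symm hy1, Ne.symm hwc, Ne.symm hyc⟩,
      by omega, by omega, Or.inr (Or.inr (Or.inl (by omega))), hG2⟩
  have e_p : G2 s(u1,u2) + 1 = G s(u1,u2) := by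
    rw [hG2, hG1]
    simp only [swapped, Sym2.eq_iff]
    simp [h12, Ne.symm h12, hcu1', Ne.symm hcu1', hcu2, Ne.symm hcu2, hz1, Ne.symm hz1,
      hz2, Ne.symm hz2, hzw, Ne.symm hzw, hzc, Ne.symm hzc, hwu1, Ne.symm hwu1,
      hwu2, Ne.symm hwu2, hwc, Ne.symm hwc, hy1, Ne.symm hy1, hyc, Ne.symm hyc,
      hyu2, Ne.symm hyu2, hyw, Ne.symm hyw]
    omega
  have hall : ∀ q, NonSimpleAt G2 q → PairLE q s(u1,u2) := by
    intro q hq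
    rw [hG2] at hq
    rcases nonSimple_swapped hq with rfl | rfl | h
    · -- q = s(c,w)
      exfalso
      have ev : G2 s(c,w) = G s(c,w) + 1 := by
        rw [hG2, hG1]
        simp only [swapped, Sym2.eq_iff]
        simp [h12, Ne.symm h12, hcu1', Ne.symm hcu1', hcu2, Ne.symm hcu2, hz1, Ne.symm hz1,
          hz2, Ne.symm hz2, hzw, Ne.symm hzw, hzc, Ne.symm hzc, hwu1, Ne.symm hwu1,
          hwu2, Ne.symm hwu2, hwc, Ne.symm hwc, hy1, Ne.symm hy1, hyc, Ne.symm hyc,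
          hyu2, Ne.symm hyu2, hyw, Ne.symm hyw]
      rw [← hG2] at hq
      rcases hq with hx | ⟨hd, _⟩
      · omega
      · exact (Ne.symm hwc) (Sym2.mk_isDiag_iff.mp hd)
    · -- q = s(y,u1)
      rcases hysafe with hlt | h0
      · exact Or.inr (pairLT_mid₁ hu hlt)
      · exfalso
        have ev : G2 s(y,u1) = G s(y,u1) + 1 := by
          rw [hG2, hG1]
          simp only [swapped, Sym2.eq_iff]
          simp [h12, Ne.symm h12, hcu1', Ne.symm hcu1', hcu2, Ne.symm hcu2, hz1, Ne.symm hz1,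
            hz2, Ne.symm hz2, hzw, Ne.symm hzw, hzc, Ne.symm hzc, hwu1, Ne.symm hwu1,
            hwu2, Ne.symm hwu2, hwc, Ne.symm hwc, hy1, Ne.symm hy1, hyc, Ne.symm hyc,
            hyu2, Ne.symm hyu2, hyw, Ne.symm hyw]
        rw [← hG2] at hq
        rcases hq with hx | ⟨hd, _⟩
        · omega
        · exact hy1 (Sym2.mk_isDiag_iff.mp hd)
    · rw [hG1] at h
      rcases nonSimple_swapped h with rfl | rfl | h2
      · -- q = s(u1,c)
        have ev : G2 s(u1,c) = G s(u1,c) := by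
          rw [hG2, hG1]
          simp only [swapped, Sym2.eq_iff]
          simp [h12, Ne.symm h12, hcu1', Ne.symm hcu1', hcu2, Ne.symm hcu2, hz1, Ne.symm hz1,
            hz2, Ne.symm hz2, hzw, Ne.symm hzw, hzc, Ne.symm hzc, hwu1, Ne.symm hwu1,
            hwu2, Ne.symm hwu2, hwc, Ne.symm hwc, hy1, Ne.symm hy1, hyc, Ne.symm hyc,
            hyu2, Ne.symm hyu2, hyw, Ne.symm hyw]
        rw [← hG2] at hq
        rcases hq with hx | ⟨hd, _⟩
        · exact hmax.2 _ (Or.inl (by omega))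
        · exact absurd (Sym2.mk_isDiag_iff.mp hd) (Ne.symm hcu1')
      · -- q = s(z,u2)
        rcases hzsafe with hlt | h0
        · exact Or.inr (pairLT_low hu hlt hu)
        · exfalso
          have ev : G2 s(z,u2) = G s(z,u2) + 1 := by
            rw [hG2, hG1]
            simp only [swapped, Sym2.eq_iff]
            simp [h12, Ne.symm h12, hcu1', Ne.symm hcu1', hcu2, Ne.symm hcu2, hz1, Ne.symm hz1,
              hz2, Ne.symm hz2, hzw, Ne.symm hzw, hzc, Ne.symm hzc, hwu1, Ne.symm hwu1,
              hwu2, Ne.symm hwu2, hwc, Ne.symm hwc, hy1, Ne.symm hy1, hyc, Ne.symm hyc,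
              hyu2, Ne.symm hyu2, hyw, Ne.symm hyw]
          rw [← hG2] at hq
          rcases hq with hx | ⟨hd, _⟩
          · omega
          · exact hz2 (Sym2.mk_isDiag_iff.mp hd)
      · exact hmax.2 q h2
  exact hmin G2 ((Relation.ReflTransGen.single step1).tail step2)
    (graphLT_master hu hmax e_p hall)

end Aux4
section Aux5
variable {V : Type*} [LinearOrder V]

set_option linter.unusedSectionVars false

private lemma gadgetB {G : Multigraph V} (hlf : LoopFree G)
    (hmin : ∀ G' : Multigraph V, Relation.ReflTransGen AdmissibleStep G G' → ¬ GraphLT G' G)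
    {u1 u2 a b c : V} (hu : u2 < u1) (hmax : MaxNonSimple G s(u1,u2))
    (ha1 : a < u1) (hb1 : b < u1) (hau2 : a ≠ u2) (hbu2 : b ≠ u2)
    (hab : 1 ≤ G s(a,b)) (hau1 : 1 ≤ G s(a,u1))
    (hc : c < u1) (hcu2 : c ≠ u2) (hca : c ≠ a) (hcb : c ≠ b)
    (hcu2e : 1 ≤ G s(c,u2)) (hsafe : c < u2 ∨ G s(c,u1) = 0) : False := by
  have m2 := two_le hu hmax
  have h12 : u1 ≠ u2 := hu.ne'
  have hau1' : a ≠ u1 := ha1.ne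
  have hbu1' : b ≠ u1 := hb1.ne
  have hcu1' : c ≠ u1 := hc.ne
  have habne : a ≠ b := fun h => by rw [h] at hab; have := hlf b; omega
  have hab' : G s(b,a) = G s(a,b) := by rw [Sym2.eq_swap]
  have hswc : G s(u1,c) = G s(c,u1) := by rw [Sym2.eq_swap]
  set G1 := swapped G u1 u2 b a with hG1
  set G2 := swapped G1 a u1 c u2 with hG2
  have v1 : G1 s(a,u1) = G s(a,u1) + 1 := by
    rw [hG1]
    simp only [swapped, Sym2.eq_iff]
    simp [h12, Ne.symm h12, hau1', Ne.symm hau1', hbu1', Ne.symm hbu1', hcu1', Ne.symm hcu1',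
      hau2, Ne.symm hau2, hbu2, Ne.symm hbu2, hcu2, Ne.symm hcu2, hca, Ne.symm hca,
      hcb, Ne.symm hcb, habne, Ne.symm habne]
  have v2 : G1 s(c,u2) = G s(c,u2) := by
    rw [hG1]
    simp only [swapped, Sym2.eq_iff]
    simp [h12, Ne.symm h12, hau1', Ne.symm hau1', hbu1', Ne.symm hbu1', hcu1', Ne.symm hcu1',
      hau2, Ne.symm hau2, hbu2, Ne.symm hbu2, hcu2, Ne.symm hcu2, hca, Ne.symm hca,
      hcb, Ne.symm hcb, habne, Ne.symm habne]
  have step1 : AdmissibleStep G G1 :=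
    ⟨u1, u2, b, a, ⟨Ne.symm hbu1', Ne.symm hau1', Ne.symm hbu2, Ne.symm hau2⟩,
      by omega, by omega, Or.inr (Or.inr (Or.inl m2)), hG1⟩
  have step2 : AdmissibleStep G1 G2 :=
    ⟨a, u1, c, u2, ⟨Ne.symm hca, hau2, Ne.symm hcu1', h12⟩,
      by omega, by omega, Or.inr (Or.inr (Or.inl (by omega))), hG2⟩
  have e_p : G2 s(u1,u2) + 1 = G s(u1,u2) := by
    rw [hG2, hG1]
    simp only [swapped, Sym2.eq_iff]
    simp [h12, Ne.symm h12, hau1', Ne.symm hau1', hbu1', Ne.symm hbu1', hcu1', Ne.symm hcu1',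
      hau2, Ne.symm hau2, hbu2, Ne.symm hbu2, hcu2, Ne.symm hcu2, hca, Ne.symm hca,
      hcb, Ne.symm hcb, habne, Ne.symm habne]
    omega
  have hall : ∀ q, NonSimpleAt G2 q → PairLE q s(u1,u2) := by
    intro q hq
    rw [hG2] at hq
    rcases nonSimple_swapped hq with rfl | rfl | h
    · -- q = s(u1,c)
      rcases hsafe with hlt | h0
      · exact Or.inr (pairLT_mid₂ hu hlt)
      · exfalso
        have ev : G2 s(u1,c) = G s(u1,c) + 1 := by
          rw [hG2, hG1]
          simp only [swapped, Sym2.eq_iff]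
          simp [h12, Ne.symm h12, hau1', Ne.symm hau1', hbu1', Ne.symm hbu1', hcu1',
            Ne.symm hcu1', hau2, Ne.symm hau2, hbu2, Ne.symm hbu2, hcu2, Ne.symm hcu2,
            hca, Ne.symm hca, hcb, Ne.symm hcb, habne, Ne.symm habne]
        rw [← hG2] at hq
        rcases hq with hx | ⟨hd, _⟩
        · omega
        · exact hcu1' (Sym2.mk_isDiag_iff.mp hd).symm
    · -- q = s(u2,a)
      exact Or.inr (pairLT_low hu hu ha1)
    · rw [hG1] at h
      rcases nonSimple_swapped h with rfl | rfl | h2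
      · -- q = s(u2,b)
        exact Or.inr (pairLT_low hu hu hb1)
      · -- q = s(a,u1)
        have ev : G2 s(a,u1) = G s(a,u1) := by
          rw [hG2, hG1]
          simp only [swapped, Sym2.eq_iff]
          simp [h12, Ne.symm h12, hau1', Ne.symm hau1', hbu1', Ne.symm hbu1', hcu1',
            Ne.symm hcu1', hau2, Ne.symm hau2, hbu2, Ne.symm hbu2, hcu2, Ne.symm hcu2,
            hca, Ne.symm hca, hcb, Ne.symm hcb, habne, Ne.symm habne]
        rw [← hG2] at hq
        rcases hq with hx | ⟨hd, _⟩
        · exact hmax.2 _ (Or.inl (by omega))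
        · exact absurd (Sym2.mk_isDiag_iff.mp hd) hau1'
      · exact hmax.2 q h2
  exact hmin G2 ((Relation.ReflTransGen.single step1).tail step2)
    (graphLT_master hu hmax e_p hall)

end Aux5
/-- Lemma 9: if the graph contains an edge between two small vertices,
then every small vertex v has at least min(ℓ+1, deg v) edges (with multiplicity) to
vertices in L ∪ {u1}, where L is the set of the ℓ large vertices. -/
theorem small_vertex_edges_to_large_and_u1 [Fintype V] [LinearOrder V]
    (G : Multigraph V) (hlf : LoopFree G)
    (hord : ∀ u v : V, mdeg G u < mdeg G v → u < v)
    (hmin : ∀ G' : Multigraph V, Relation.ReflTransGen AdmissibleStep G G' → ¬ GraphLT G' G)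
    (u1 u2 : V) (hmax : MaxNonSimple G s(u1, u2)) (hu : u2 < u1)
    (hsmalledge : ∃ a b : V, a ≠ u1 ∧ a ≠ u2 ∧ a < u1 ∧ b ≠ u1 ∧ b ≠ u2 ∧ b < u1 ∧
      1 ≤ G s(a, b))
    (c : V) (hcu1 : c ≠ u1) (hcu2 : c ≠ u2) (hcsmall : c < u1) :
    min ((univ.filter (fun w : V => u1 < w)).card + 1) (mdeg G c) ≤
      ∑ w ∈ univ.filter (fun w : V => u1 ≤ w), G s(c, w) := by
  by_contra hcon
  push_neg at hcon
  have hm2 := two_le hu hmax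
  set F := univ.filter (fun w : V => u1 ≤ w) with hF
  have hltl : ∑ w ∈ F, G s(c,w) < (univ.filter (fun w : V => u1 < w)).card + 1 :=
    lt_of_lt_of_le hcon (min_le_left _ _)
  have hltd : ∑ w ∈ F, G s(c,w) < mdeg G c :=
    lt_of_lt_of_le hcon (min_le_right _ _)
  have hFcard : F.card = (univ.filter (fun w : V => u1 < w)).card + 1 := by
    have hins : F = insert u1 (univ.filter (fun w : V => u1 < w)) := by
      ext v
      simp only [hF, Finset.mem_insert, Finset.mem_filter, Finset.mem_univ, true_and]
      constructor
      · intro h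
        rcases h.lt_or_eq with h' | h'
        · exact Or.inr h'
        · exact Or.inl h'.symm
      · rintro (rfl | h')
        · exact le_refl _
        · exact h'.le
    rw [hins, Finset.card_insert_of_notMem (by simp)]
  obtain ⟨w, hwF, hw0⟩ : ∃ w ∈ F, G s(c,w) = 0 := by
    by_contra hno
    push_neg at hno
    have : F.card ≤ ∑ w ∈ F, G s(c,w) :=
      card_le_sum_ones fun x hx => by have := hno x hx; omega
    omega
  have hwu1 : u1 ≤ w := (Finset.mem_filter.mp hwF).2
  obtain ⟨x, hxlt, hx1⟩ : ∃ x, x < u1 ∧ 1 ≤ G s(c,x) := by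
    by_contra hno
    push_neg at hno
    have hdeg : mdeg G c = ∑ y : V, G s(c,y) := by rw [mdeg, hlf, add_zero]
    have hsplit := Finset.sum_filter_add_sum_filter_not univ
      (fun w : V => u1 ≤ w) (fun w => G s(c,w))
    rw [← hF] at hsplit
    have hz : ∑ y ∈ univ.filter (fun w : V => ¬ u1 ≤ w), G s(c,y) = 0 := by
      refine Finset.sum_eq_zero fun y hy => ?_
      have hyl : ¬ u1 ≤ y := (Finset.mem_filter.mp hy).2
      have := hno y (lt_of_not_ge hyl)
      omega
    omega
  by_cases hX : ∃ x', x' < u1 ∧ x' ≠ u2 ∧ 1 ≤ G s(c,x')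
  · obtain ⟨x', hxlt', hxu2', hx1'⟩ := hX
    have hF2 : ¬ (c < u2 ∨ G s(c,u1) = 0) := fun hsafe =>
      gadgetA hmin hu hmax hcsmall hxlt' hcu2 hxu2' hx1' hsafe
    push_neg at hF2
    have hcu1e : 1 ≤ G s(c,u1) := by have := hF2.2; omega
    have hwne : w ≠ u1 := fun h => by rw [h] at hw0; omega
    have hww : u1 < w := lt_of_le_of_ne hwu1 (Ne.symm hwne)
    obtain ⟨y, hy1, hyc, hwy, hysafe⟩ := lemmaW hlf hord hu hmax hww hw0 hcu1e hcsmall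
    exact gadgetC hlf hmin hu hmax hcsmall hcu2 hxlt'.ne hxu2' (hxlt'.trans hww).ne
      hx1' hcu1e hww hw0 hy1 hyc hwy hysafe (Or.inl hxlt')
  · push_neg at hX
    have hxu2 : x = u2 := by
      by_contra hne
      have := hX x hxlt hne
      omega
    have hcu2e : 1 ≤ G s(c,u2) := hxu2 ▸ hx1
    obtain ⟨a, b, hau1, hau2, halt, hbu1, hbu2, hblt, habe⟩ := hsmalledge
    have hca : c ≠ a := fun h => by
      rw [← h] at habe; have := hX b hblt hbu2; omega
    have hcb : c ≠ b := fun h => by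
      rw [← h, Sym2.eq_swap] at habe; have := hX a halt hau2; omega
    have hFa : ¬ (a < u2 ∨ G s(a,u1) = 0) := fun hs =>
      gadgetA hmin hu hmax halt hblt hau2 hbu2 habe hs
    push_neg at hFa
    by_cases hsafe : c < u2 ∨ G s(c,u1) = 0
    · exact gadgetB hlf hmin hu hmax halt hblt hau2 hbu2 habe (by have := hFa.2; omega)
        hcsmall hcu2 hca hcb hcu2e hsafe
    · push_neg at hsafe
      have hu2c : u2 < c := lt_of_le_of_ne hsafe.1 (Ne.symm hcu2)
      have hcu1e : 1 ≤ G s(c,u1) := by have := hsafe.2; omega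
      have hwne : w ≠ u1 := fun h => by rw [h] at hw0; omega
      have hww : u1 < w := lt_of_le_of_ne hwu1 (Ne.symm hwne)
      by_cases hα : ∃ w', u1 < w' ∧ 1 ≤ G s(c,w') ∧ G s(w',u2) = 0
      · obtain ⟨w', hw'1, hw'e, hw'u2⟩ := hα
        obtain ⟨y, hy1, hyc, hwy, hysafe⟩ := lemmaW hlf hord hu hmax hww hw0 hcu1e hcsmall
        have hzw : w' ≠ w := fun h => by rw [h] at hw'e; omega
        exact gadgetC hlf hmin hu hmax hcsmall hcu2 hw'1.ne' (hu.trans hw'1).ne' hzw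
          hw'e hcu1e hww hw0 hy1 hyc hwy hysafe (Or.inr hw'u2)
      · push_neg at hα
        exact betaCount hlf hord hu hmax hcsmall hu2c
          (fun y hy hyne => by have := hX y hy hyne; omega)
          (fun w' h1 h2 => by have := hα w' h1 h2; omega)
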